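/- Suppose p = 1, or p > 1 and d_Y(y₁,y₂) ≤ max{d_Y(y₁,y₀), d_Y(y₀,y₂)} for all y₁,y₂ ∈ Y. Let ([m],v,e) and ([n],w,f) be attributed simple graphs with m ≤ n ≤ l and n ≥ 1. Extend X by two auxiliary points x_*, x'_* with d_X(x_*,x)^p = C₂^p − C_Y^p and d_X(x'_*,x)^p = d_X(x_*,x'_*)^p = C₂^p for all x ∈ X. Fill up ([m],v,e) to size l by setting v_i = x_* for m+1 ≤ i ≤ l and e_{ii'} = y₀ whenever max{i,i'} ≥ m+1, and fill up ([n],w,f) to size l by setting w_i = x'_* for n+1 ≤ i ≤ l and f_{ii'} = y₀ whenever max{i,i'} ≥ n+1. Then d_{G,R₂}(([m],v,e),([n],w,f)) ≤ (d_{G,R₂}(([l],v,e),([l],w,f))^p + C_Y^p·(n−m)/n)^{1/p}. -/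

import Mathlib

open Finset

section GraphMetricDefs

variable {X Y : Type*}

/-- Two attributed graphs `([m],v,e)` and `([n],w,f)` are equal (i.e. agree up to
relabeling of the vertices). -/
def GraphEqual {m n : ℕ} (v : Fin m → X) (e : Fin m → Fin m → Y)
    (w : Fin n → X) (f : Fin n → Fin n → Y) : Prop :=
  ∃ h : m = n, ∃ π : Equiv.Perm (Fin n),
    (∀ i : Fin m, v i = w (π (Fin.cast h i))) ∧
    (∀ i i' : Fin m, e i i' = f (π (Fin.cast h i)) (π (Fin.cast h i')))

/-- `e` is a valid edge-attribute map: symmetric with no-edge value `y₀` on the diagonal. -/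
def IsGraph {m : ℕ} (y₀ : Y) (e : Fin m → Fin m → Y) : Prop :=
  (∀ i i', e i i' = e i' i) ∧ ∀ i, e i i = y₀

variable [PseudoMetricSpace X] [PseudoMetricSpace Y]

/-- The expression in brackets (raised to power `1/p`) in the definition of the GTT
distance, for a given subset `I ⊆ [m]` and a permutation `π ∈ S_n`. -/
noncomputable def gttVal (y₀ : Y) (p C : ℝ) {m n : ℕ} (hmn : m ≤ n)
    (v : Fin m → X) (e : Fin m → Fin m → Y)
    (w : Fin n → X) (f : Fin n → Fin n → Y)
    (I : Finset (Fin m)) (π : Equiv.Perm (Fin n)) : ℝ :=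
  (((m : ℝ) + (n : ℝ) - 2 * (I.card : ℝ)) * C ^ p
    + ∑ i ∈ I, dist (v i) (w (π (Fin.castLE hmn i))) ^ p
    + (1/2) * ∑ i ∈ I, ∑ i' ∈ I,
        dist (e i i') (f (π (Fin.castLE hmn i)) (π (Fin.castLE hmn i'))) ^ p
    + (1/2) * ∑ q ∈ ((univ : Finset (Fin m × Fin m)) \ I ×ˢ I),
        dist (e q.1 q.2) y₀ ^ p
    + (1/2) * ∑ q ∈ ((univ : Finset (Fin n × Fin n)) \
        ((I.image fun i => π (Fin.castLE hmn i)) ×ˢ (I.image fun i => π (Fin.castLE hmn i)))),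
        dist y₀ (f q.1 q.2) ^ p) ^ (1/p)

/-- The graph transport-transform (GTT) distance of order `p` with vertex penalty `C`
between `([m],v,e)` and `([n],w,f)`, for `m ≤ n`. -/
noncomputable def dGTT (y₀ : Y) (p C : ℝ) {m n : ℕ} (hmn : m ≤ n)
    (v : Fin m → X) (e : Fin m → Fin m → Y)
    (w : Fin n → X) (f : Fin n → Fin n → Y) : ℝ :=
  Finset.inf' Finset.univ Finset.univ_nonempty
    fun Iπ : Finset (Fin m) × Equiv.Perm (Fin n) => gttVal y₀ p C hmn v e w f Iπ.1 Iπ.2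

/-- The GTT distance between two graphs of arbitrary sizes (extended by symmetry). -/
noncomputable def dGTT' (y₀ : Y) (p C : ℝ) {m n : ℕ}
    (v : Fin m → X) (e : Fin m → Fin m → Y)
    (w : Fin n → X) (f : Fin n → Fin n → Y) : ℝ :=
  if h : m ≤ n then dGTT y₀ p C h v e w f else dGTT y₀ p C (le_of_not_ge h) w f v e

/-- The GOSPA1 distance of order `p` with penalties `C₁` (vertex) and `CY` (edge bound)
between `([m],v,e)` and `([n],w,f)`, for `m ≤ n`. -/
noncomputable def dGOSPA1 (p C₁ CY : ℝ) {m n : ℕ} (hmn : m ≤ n)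
    (v : Fin m → X) (e : Fin m → Fin m → Y)
    (w : Fin n → X) (f : Fin n → Fin n → Y) : ℝ :=
  ((n : ℝ) ^ (1/p))⁻¹ *
    Finset.inf' Finset.univ Finset.univ_nonempty fun π : Equiv.Perm (Fin n) =>
      (((n : ℝ) - (m : ℝ)) * C₁ ^ p
        + ∑ i : Fin m, dist (v i) (w (π (Fin.castLE hmn i))) ^ p
        + (1/2) * ((n : ℝ) - 1)⁻¹ *
            ∑ i : Fin m, ((∑ i' : Fin m,
                dist (e i i') (f (π (Fin.castLE hmn i)) (π (Fin.castLE hmn i'))) ^ p)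
              + ((n : ℝ) - (m : ℝ)) * CY ^ p)) ^ (1/p)

/-- The GOSPA1 distance between two graphs of arbitrary sizes (extended by symmetry). -/
noncomputable def dGOSPA1' (p C₁ CY : ℝ) {m n : ℕ}
    (v : Fin m → X) (e : Fin m → Fin m → Y)
    (w : Fin n → X) (f : Fin n → Fin n → Y) : ℝ :=
  if h : m ≤ n then dGOSPA1 p C₁ CY h v e w f
  else dGOSPA1 p C₁ CY (le_of_not_ge h) w f v e

/-- The GOSPA2 distance of order `p` with penalty `C₂`
between `([m],v,e)` and `([n],w,f)`, for `m ≤ n`. -/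
noncomputable def dGOSPA2 (y₀ : Y) (p C₂ : ℝ) {m n : ℕ} (hmn : m ≤ n)
    (v : Fin m → X) (e : Fin m → Fin m → Y)
    (w : Fin n → X) (f : Fin n → Fin n → Y) : ℝ :=
  ((n : ℝ) ^ (1/p))⁻¹ *
    Finset.inf' Finset.univ Finset.univ_nonempty fun π : Equiv.Perm (Fin n) =>
      (((n : ℝ) - (m : ℝ)) * C₂ ^ p
        + ∑ i : Fin m, dist (v i) (w (π (Fin.castLE hmn i))) ^ p
        + (1/2) * ((n : ℝ) - 1)⁻¹ *
            ∑ i : Fin n, ∑ i' : Fin n,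
              (if h : (i : ℕ) < m ∧ (i' : ℕ) < m
               then dist (e ⟨i.1, h.1⟩ ⟨i'.1, h.2⟩) (f (π i) (π i')) ^ p
               else dist y₀ (f (π i) (π i')) ^ p)) ^ (1/p)

/-- The GOSPA2 distance between two graphs of arbitrary sizes (extended by symmetry). -/
noncomputable def dGOSPA2' (y₀ : Y) (p C₂ : ℝ) {m n : ℕ}
    (v : Fin m → X) (e : Fin m → Fin m → Y)
    (w : Fin n → X) (f : Fin n → Fin n → Y) : ℝ :=
  if h : m ≤ n then dGOSPA2 y₀ p C₂ h v e w f
  else dGOSPA2 y₀ p C₂ (le_of_not_ge h) w f v e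

end GraphMetricDefs

/-
Take a permutation `π'` of `[l]` that is optimal for the filled-up graphs and pull it back to a
permutation `π` of `[n]` through an injection `σ : [n] → [l]` with `π' ∘ σ = π`: vertices
`i < m` that `π'` matches to original vertices keep their index, all others go to padding
vertices `≥ m`, which carry `x_*`. Since `x_*` is at distance `(C₂^p - C_Y^p)^{1/p} ≥ C_X` from
every original vertex, each vertex cost under `π` is at most the filled-up cost at `σ`. So is
each edge cost, except for an edge between original vertices that `σ` moves into the padding;
by the `p`-th power triangle inequality through `y₀` it is paid for by its own pair, which `π'`
sends into the padding of the second graph. Passing from the normalisations `1/n`, `1/(n-1)`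
to `1/l`, `1/(l-1)` then costs at most `C_Y^p (n-m)/n`, because on the matched part every
vertex cost is at most `C₂^p - C_Y^p` and every edge cost at most `C_Y^p`.
-/

theorem Real.rpow_le_rpow_add_of_le_max {a b c p : ℝ} (ha : 0 ≤ a) (hb : 0 ≤ b) (hc : 0 ≤ c)
    (hp : 0 ≤ p) (h : c ≤ max a b) : c ^ p ≤ a ^ p + b ^ p := by
  have hap := Real.rpow_nonneg ha p
  have hbp := Real.rpow_nonneg hb p
  calc c ^ p ≤ max a b ^ p := Real.rpow_le_rpow hc h hp
    _ ≤ a ^ p + b ^ p := by rcases max_choice a b with h | h <;> rw [h] <;> linarith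

theorem dist_rpow_triangle {Y : Type*} [PseudoMetricSpace Y] {p : ℝ} {y₀ : Y}
    (hp : 0 ≤ p) (hpY : p = 1 ∨ ∀ y₁ y₂ : Y, dist y₁ y₂ ≤ max (dist y₁ y₀) (dist y₀ y₂))
    (y₁ y₂ : Y) : dist y₁ y₂ ^ p ≤ dist y₁ y₀ ^ p + dist y₀ y₂ ^ p := by
  rcases hpY with rfl | hult
  · simpa using dist_triangle y₁ y₀ y₂
  · exact Real.rpow_le_rpow_add_of_le_max dist_nonneg dist_nonneg dist_nonneg hp (hult y₁ y₂)

theorem Finset.sum_comp_add_sum_comp_le {ι κ γ M : Type*} [Fintype γ] [AddCommMonoid M]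
    [PartialOrder M] [IsOrderedAddMonoid M] {G : γ → M} (hG : ∀ c, 0 ≤ G c)
    {s : Finset ι} {t : Finset κ} {φ : ι → γ} {ψ : κ → γ} (hφ : Set.InjOn φ s)
    (hψ : Set.InjOn ψ t) (hdisj : ∀ a ∈ s, ∀ b ∈ t, φ a ≠ ψ b) :
    ∑ a ∈ s, G (φ a) + ∑ b ∈ t, G (ψ b) ≤ ∑ c, G c := by
  classical
  have hdisj' : Disjoint (s.image φ) (t.image ψ) := by
    simp only [disjoint_left, mem_image]
    rintro _ ⟨a, ha, rfl⟩ ⟨b, hb, hab⟩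
    exact hdisj a ha b hb hab.symm
  rw [← sum_image hφ, ← sum_image hψ, ← sum_union hdisj']
  exact sum_le_univ_sum_of_nonneg hG

theorem Fin.sum_univ_eq_sum_castLE_add_nsmul {M : Type*} [AddCommMonoid M] {n l : ℕ}
    (h : n ≤ l) {G : Fin l → M} {c : M} (hc : ∀ k : Fin l, n ≤ k → G k = c) :
    ∑ k, G k = ∑ i : Fin n, G (Fin.castLE h i) + (l - n) • c := by
  obtain ⟨r, rfl⟩ := Nat.exists_eq_add_of_le h
  rw [Fin.sum_univ_add, Nat.add_sub_cancel_left]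
  congr 1
  simp [hc]

theorem Fintype.sum_sum_le_of_diag_eq_zero {ι : Type*} [Fintype ι] [DecidableEq ι]
    {F : ι → ι → ℝ} {B : ℝ} (hdiag : ∀ i, F i i = 0) (hF : ∀ i j, F i j ≤ B) :
    ∑ i, ∑ j, F i j ≤ card ι * (card ι - 1) * B := by
  have hrow : ∀ i, ∑ j, F i j ≤ (card ι - 1) * B := fun i => by
    rw [← sum_erase univ (hdiag i)]
    refine (sum_le_card_nsmul _ _ _ fun j _ => hF i j).trans_eq ?_
    rw [card_erase_of_mem (mem_univ i), card_univ, nsmul_eq_mul,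
      Nat.cast_sub (card_pos_iff.mpr ⟨i⟩), Nat.cast_one]
  calc ∑ i, ∑ j, F i j ≤ ∑ _i : ι, (card ι - 1) * B := sum_le_sum fun i _ => hrow i
    _ = card ι * (card ι - 1) * B := by rw [sum_const, card_univ, nsmul_eq_mul, mul_assoc]

section Fill

variable {X Y : Type*} {m n l : ℕ}

def fillVertices (x : X) (v : Fin m → X) (i : Fin n) : X :=
  if h : (i : ℕ) < m then v ⟨i, h⟩ else x

def fillEdges (y₀ : Y) (e : Fin m → Fin m → Y) (i i' : Fin n) : Y :=
  if h : (i : ℕ) < m ∧ (i' : ℕ) < m then e ⟨i, h.1⟩ ⟨i', h.2⟩ else y₀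

theorem fillVertices_of_le {x : X} {v : Fin m → X} {i : Fin n} (h : m ≤ i) :
    fillVertices x v i = x :=
  dif_neg h.not_gt

@[simp]
theorem fillVertices_castLE (h : m ≤ n) (x : X) (v : Fin m → X) (i : Fin m) :
    fillVertices x v (Fin.castLE h i) = v i :=
  dif_pos i.isLt

theorem fillVertices_mem (x : X) (v : Fin m → X) (i : Fin n) :
    fillVertices x v i ∈ insert x (Set.range v) := by
  unfold fillVertices
  split_ifs
  · exact Or.inr ⟨_, rfl⟩
  · exact Or.inl rfl

theorem fillEdges_of_not_lt {y₀ : Y} {e : Fin m → Fin m → Y} {i i' : Fin n}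
    (h : ¬((i : ℕ) < m ∧ (i' : ℕ) < m)) : fillEdges y₀ e i i' = y₀ :=
  dif_neg h

@[simp]
theorem fillEdges_castLE (h : n ≤ l) (y₀ : Y) (e : Fin m → Fin m → Y) (i i' : Fin n) :
    fillEdges y₀ e (Fin.castLE h i) (Fin.castLE h i') = fillEdges y₀ e i i' :=
  rfl

@[simp]
theorem fillEdges_self (y₀ : Y) (e : Fin m → Fin m → Y) : fillEdges y₀ e = e :=
  funext₂ fun i i' => dif_pos ⟨i.isLt, i'.isLt⟩

theorem IsGraph.fillEdges_diag {y₀ : Y} {e : Fin m → Fin m → Y} (he : IsGraph y₀ e) (i : Fin n) :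
    fillEdges y₀ e i i = y₀ := by
  unfold fillEdges
  split_ifs
  · exact he.2 _
  · rfl

end Fill

-- `σ i` is the vertex of the filled-up first graph that `π'` sends to `π i`; the original vertices
-- that `π'` matches to original vertices stay in place, all other vertices go to the padding.
structure IsLift (m : ℕ) {n l : ℕ} (hnl : n ≤ l) (π' : Equiv.Perm (Fin l))
    (π : Equiv.Perm (Fin n)) (σ : Fin n → Fin l) : Prop where
  apply_eq : ∀ i, π' (σ i) = Fin.castLE hnl (π i)
  eq_castLE_of_matched : ∀ i : Fin n, (i : ℕ) < m → (π' (Fin.castLE hnl i) : ℕ) < n →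
    σ i = Fin.castLE hnl i
  eq_castLE_of_lt : ∀ i, (σ i : ℕ) < m → σ i = Fin.castLE hnl i

theorem IsLift.injective {m n l : ℕ} {hnl : n ≤ l} {π' : Equiv.Perm (Fin l)}
    {π : Equiv.Perm (Fin n)} {σ : Fin n → Fin l} (h : IsLift m hnl π' π σ) :
    Function.Injective σ := fun i j hij =>
  π.injective <| Fin.castLE_injective hnl <| by rw [← h.apply_eq, ← h.apply_eq, hij]

theorem exists_isLift {m n l : ℕ} (hmn : m ≤ n) (hnl : n ≤ l) (π' : Equiv.Perm (Fin l)) :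
    ∃ π σ, IsLift m hnl π' π σ := by
  classical
  set T : Finset (Fin l) := univ.filter fun j => (π' j : ℕ) < n
  have hT : Fintype.card (Fin n) = #T := by
    rw [Finset.card_equiv π' (t := univ.filter fun k : Fin l => (k : ℕ) < n) (by simp [T]),
      Fin.card_filter_val_lt, min_eq_right hnl, Fintype.card_fin]
  set A : Set (Fin n) := {i | (i : ℕ) < m ∧ (π' (Fin.castLE hnl i) : ℕ) < n}
  obtain ⟨g, hg⟩ := Set.MapsTo.exists_equiv_extend_of_card_eq hT (s := A)
    (fun i hi => by simpa [T] using hi.2) (Fin.castLE_injective hnl).injOn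
  have hgT : ∀ i, (π' (g i) : ℕ) < n := fun i => (mem_filter.mp (g i).2).2
  have hinj : Function.Injective fun i => (⟨π' (g i), hgT i⟩ : Fin n) := fun i j hij =>
    g.injective <| Subtype.ext <| π'.injective <| Fin.ext <| Fin.mk.inj_iff.mp hij
  refine ⟨Equiv.ofBijective _ (Finite.injective_iff_bijective.mp hinj), fun i => g i,
    fun i => Fin.ext rfl, fun i h₁ h₂ => hg i ⟨h₁, h₂⟩, fun i hi => ?_⟩
  -- `g i < m` is itself a matched vertex `j` of `[n]`, and `g j = g i`
  set j : Fin n := ⟨g i, hi.trans_le hmn⟩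
  have hj : (g j : Fin l) = g i := (hg j ⟨hi, hgT i⟩).trans rfl
  rw [← g.injective (Subtype.ext hj)]
  exact hg j ⟨hi, hgT i⟩

section Vertices

variable {X : Type*} [PseudoMetricSpace X] {m n l : ℕ} {p K : ℝ} {xstar : X}
  {a : Fin m → X} {b : Fin n → X}

theorem dist_fillVertices_rpow_le (hclose : ∀ i j, dist (a i) (b j) ^ p ≤ K)
    (hK : ∀ j, dist xstar (b j) ^ p = K) (k : Fin l) (j : Fin n) :
    dist (fillVertices xstar a k) (b j) ^ p ≤ K := by
  rcases fillVertices_mem xstar a k with h | ⟨i, h⟩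
  · rw [h]; exact (hK j).le
  · rw [← h]; exact hclose i j

theorem sum_dist_rpow_add_le_sum_dist_fillVertices (hmn : m ≤ n) {hnl : n ≤ l}
    {π' : Equiv.Perm (Fin l)} {π : Equiv.Perm (Fin n)} {σ : Fin n → Fin l}
    (hσ : IsLift m hnl π' π σ) (hclose : ∀ i j, dist (a i) (b j) ^ p ≤ K)
    (hK : ∀ j, dist xstar (b j) ^ p = K) :
    ∑ i : Fin m, dist (a i) (b (π (Fin.castLE hmn i))) ^ p + ((n : ℝ) - m) * K ≤
      ∑ i : Fin n, dist (fillVertices xstar a (σ i)) (b (π i)) ^ p := by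
  have hlow : ∀ i : Fin n, m ≤ (i : ℕ) → m ≤ (σ i : ℕ) := fun i hi => by
    by_contra! h
    have := congrArg Fin.val (hσ.eq_castLE_of_lt i h)
    simp only [Fin.val_castLE] at this
    omega
  rw [Fin.sum_univ_eq_sum_castLE_add_nsmul hmn (c := K)
    (fun i hi => by rw [fillVertices_of_le (hlow i hi), hK]), nsmul_eq_mul, Nat.cast_sub hmn]
  refine add_le_add_left (sum_le_sum fun i _ => ?_) (((n : ℝ) - m) * K)
  by_cases h : (σ (Fin.castLE hmn i) : ℕ) < m
  · rw [hσ.eq_castLE_of_lt _ h, Fin.castLE_castLE, fillVertices_castLE]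
  · rw [fillVertices_of_le (not_lt.mp h), hK]
    exact hclose _ _

theorem sum_dist_fillVertices_eq {xstar' : X} {C : ℝ} {hnl : n ≤ l}
    {π' : Equiv.Perm (Fin l)} {π : Equiv.Perm (Fin n)} {σ : Fin n → Fin l}
    (hσ : IsLift m hnl π' π σ) (hC : ∀ k : Fin l, dist (fillVertices xstar a k) xstar' ^ p = C) :
    ∑ j : Fin l, dist (fillVertices xstar a j) (fillVertices xstar' b (π' j)) ^ p =
      ∑ i : Fin n, dist (fillVertices xstar a (σ i)) (b (π i)) ^ p + ((l : ℝ) - n) * C := by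
  have hσ' : ∀ i, π'.symm (Fin.castLE hnl (π i)) = σ i := fun i =>
    π'.symm_apply_eq.mpr (hσ.apply_eq i).symm
  rw [← π'.symm.sum_comp, Fin.sum_univ_eq_sum_castLE_add_nsmul hnl (c := C)
    (fun k hk => by rw [Equiv.apply_symm_apply, fillVertices_of_le hk, hC]),
    ← Equiv.sum_comp π, nsmul_eq_mul, Nat.cast_sub hnl]
  simp only [hσ', hσ.apply_eq, fillVertices_castLE]

end Vertices

section Edges

variable {Y : Type*} [PseudoMetricSpace Y] {m n l : ℕ} {p : ℝ} {y₀ : Y}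
  {e : Fin m → Fin m → Y} {f : Fin n → Fin n → Y}

theorem dist_fillEdges_rpow_le {hnl : n ≤ l} {π' : Equiv.Perm (Fin l)} {π : Equiv.Perm (Fin n)}
    {σ : Fin n → Fin l} (hσ : IsLift m hnl π' π σ)
    (htri : ∀ y₁ y₂ : Y, dist y₁ y₂ ^ p ≤ dist y₁ y₀ ^ p + dist y₀ y₂ ^ p) (i i' : Fin n) :
    dist (fillEdges y₀ e i i') (f (π i) (π i')) ^ p ≤
      dist (fillEdges y₀ e (σ i) (σ i')) (fillEdges y₀ f (π' (σ i)) (π' (σ i'))) ^ p +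
        if ¬((π' (Fin.castLE hnl i) : ℕ) < n ∧ (π' (Fin.castLE hnl i') : ℕ) < n)
        then dist (fillEdges y₀ e (Fin.castLE hnl i) (Fin.castLE hnl i'))
          (fillEdges y₀ f (π' (Fin.castLE hnl i)) (π' (Fin.castLE hnl i'))) ^ p
        else 0 := by
  rw [hσ.apply_eq, hσ.apply_eq, fillEdges_castLE, fillEdges_self]
  by_cases hσm : (σ i : ℕ) < m ∧ (σ i' : ℕ) < m
  · rw [hσ.eq_castLE_of_lt i hσm.1, hσ.eq_castLE_of_lt i' hσm.2, fillEdges_castLE]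
    exact le_add_of_nonneg_right (ite_nonneg (by positivity) le_rfl)
  rw [fillEdges_of_not_lt hσm]
  by_cases hm : (i : ℕ) < m ∧ (i' : ℕ) < m
  · -- an edge between original vertices that `σ` moves into the padding was matched by `π'`
    -- to a pair containing a padding vertex, where it pays its distance to `y₀`
    have hunmatched : ¬((π' (Fin.castLE hnl i) : ℕ) < n ∧
        (π' (Fin.castLE hnl i') : ℕ) < n) := fun h => hσm
      ⟨(hσ.eq_castLE_of_matched i hm.1 h.1) ▸ hm.1, (hσ.eq_castLE_of_matched i' hm.2 h.2) ▸ hm.2⟩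
    rw [if_pos hunmatched, fillEdges_castLE, fillEdges_of_not_lt hunmatched, add_comm]
    exact htri _ _
  · rw [fillEdges_of_not_lt hm]
    exact le_add_of_nonneg_right (ite_nonneg (by positivity) le_rfl)

theorem sum_sum_dist_fillEdges_le {hnl : n ≤ l} {π' : Equiv.Perm (Fin l)}
    {π : Equiv.Perm (Fin n)} {σ : Fin n → Fin l} (hσ : IsLift m hnl π' π σ)
    (htri : ∀ y₁ y₂ : Y, dist y₁ y₂ ^ p ≤ dist y₁ y₀ ^ p + dist y₀ y₂ ^ p) :
    ∑ i : Fin n, ∑ i' : Fin n, dist (fillEdges y₀ e i i') (f (π i) (π i')) ^ p ≤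
      ∑ j : Fin l, ∑ j' : Fin l,
        dist (fillEdges y₀ e j j') (fillEdges y₀ f (π' j) (π' j')) ^ p := by
  classical
  set G : Fin l × Fin l → ℝ :=
    fun r => dist (fillEdges y₀ e r.1 r.2) (fillEdges y₀ f (π' r.1) (π' r.2)) ^ p
  set ι : Fin n × Fin n → Fin l × Fin l := Prod.map (Fin.castLE hnl) (Fin.castLE hnl)
  set U := univ.filter fun q : Fin n × Fin n =>
    ¬((π' (ι q).1 : ℕ) < n ∧ (π' (ι q).2 : ℕ) < n)
  have hdisj : ∀ q ∈ univ, ∀ q' ∈ U, Prod.map σ σ q ≠ ι q' := fun q _ q' hq' h => by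
    refine (mem_filter.mp hq').2 ⟨?_, ?_⟩
    · rw [← (Prod.ext_iff.mp h).1, Prod.map_fst, hσ.apply_eq]; exact (π q.1).isLt
    · rw [← (Prod.ext_iff.mp h).2, Prod.map_snd, hσ.apply_eq]; exact (π q.2).isLt
  calc _ = ∑ q : Fin n × Fin n, dist (fillEdges y₀ e q.1 q.2) (f (π q.1) (π q.2)) ^ p :=
        (Fintype.sum_prod_type' _).symm
    _ ≤ ∑ q : Fin n × Fin n, (G (Prod.map σ σ q) + if q ∈ U then G (ι q) else 0) :=
        sum_le_sum fun q _ => by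
          simp only [U, mem_filter, mem_univ, true_and]
          exact dist_fillEdges_rpow_le hσ htri q.1 q.2
    _ = ∑ q, G (Prod.map σ σ q) + ∑ q ∈ U, G (ι q) := by rw [sum_add_distrib, sum_ite_mem,
        univ_inter]
    _ ≤ ∑ r, G r := sum_comp_add_sum_comp_le (fun r => by positivity)
        (hσ.injective.prodMap hσ.injective).injOn
        ((Fin.castLE_injective hnl).prodMap (Fin.castLE_injective hnl)).injOn hdisj
    _ = _ := Fintype.sum_prod_type' fun j j' => G (j, j')

theorem sum_sum_dist_fillEdges_le_mul (he : IsGraph y₀ e) (hf : IsGraph y₀ f) (hp : 0 < p)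
    {CY : ℝ} (hdY : ∀ y y' : Y, dist y y' ≤ CY) (π : Equiv.Perm (Fin n)) :
    ∑ i : Fin n, ∑ i' : Fin n, dist (fillEdges y₀ e i i') (f (π i) (π i')) ^ p ≤
      n * (n - 1) * CY ^ p := by
  simpa using Fintype.sum_sum_le_of_diag_eq_zero
    (fun i => by rw [he.fillEdges_diag, hf.2, dist_self, Real.zero_rpow hp.ne'])
    (fun i i' => Real.rpow_le_rpow dist_nonneg (hdY (fillEdges y₀ e i i') (f (π i) (π i'))) hp.le)

end Edges

theorem mul_edge_cost_le {n l : ℕ} (hn : 1 ≤ n) (hnl : n ≤ l) {S T Y : ℝ} (hY : 0 ≤ Y)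
    (hS : 0 ≤ S) (hST : S ≤ T) (hSY : S ≤ n * (n - 1) * Y) :
    l * (1 / 2 * ((n : ℝ) - 1)⁻¹ * S) ≤ n * (1 / 2 * ((l : ℝ) - 1)⁻¹ * T) + n * (l - n) * Y := by
  have hT : 0 ≤ T := hS.trans hST
  have hnl' : (n : ℝ) ≤ l := by exact_mod_cast hnl
  rcases hn.eq_or_lt with rfl | hn
  · have : (1 : ℝ) ≤ l := by exact_mod_cast hnl
    simp only [Nat.cast_one, sub_self, inv_zero, mul_zero, zero_mul, one_mul]
    have : 0 ≤ ((l : ℝ) - 1)⁻¹ := inv_nonneg.mpr (by linarith)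
    positivity
  have hn' : (1 : ℝ) < n := by exact_mod_cast hn
  -- the integrality of `n` and `l` enters here: `l = n` or `l ≥ n + 1`
  have hgap : 0 ≤ ((l : ℝ) - n) * (l - n - 1) := by
    rcases hnl.eq_or_lt with rfl | h
    · simp
    · have : (n : ℝ) + 1 ≤ l := by exact_mod_cast h
      exact mul_nonneg (by linarith) (by linarith)
  have key : l * (l - 1) * S ≤ n * (n - 1) * T + 2 * n * (l - n) * (n - 1) * (l - 1) * Y := by
    nlinarith [mul_nonneg (mul_nonneg (by linarith : (0 : ℝ) ≤ n) (by linarith : (0 : ℝ) ≤ n - 1))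
        (sub_nonneg.mpr hST),
      mul_nonneg (by nlinarith : (0 : ℝ) ≤ l * (l - 1) - n * (n - 1)) (sub_nonneg.mpr hSY),
      mul_nonneg (mul_nonneg (mul_nonneg (by linarith : (0 : ℝ) ≤ n)
        (by linarith : (0 : ℝ) ≤ n - 1)) hY) hgap]
  have hn1 : (0 : ℝ) < n - 1 := by linarith
  have hl1 : (0 : ℝ) < l - 1 := by linarith
  calc l * (1 / 2 * ((n : ℝ) - 1)⁻¹ * S) = l * (l - 1) * S / (2 * (n - 1) * (l - 1)) := by
        field_simp
    _ ≤ (n * (n - 1) * T + 2 * n * (l - n) * (n - 1) * (l - 1) * Y) / (2 * (n - 1) * (l - 1)) := by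
        gcongr
    _ = n * (1 / 2 * ((l : ℝ) - 1)⁻¹ * T) + n * (l - n) * Y := by
        field_simp

theorem normalized_cost_le {m n l : ℕ} (hnl : n ≤ l) (hn : 1 ≤ n)
    {SV S TV SE TE C Y : ℝ} (hY : 0 ≤ Y) (hSV : SV + (n - m) * (C - Y) ≤ S)
    (hS : S ≤ n * (C - Y)) (hTV : TV = S + (l - n) * C) (hSE : 0 ≤ SE) (hSETE : SE ≤ TE)
    (hSEY : SE ≤ n * (n - 1) * Y) :
    ((n - m) * C + SV + 1 / 2 * ((n : ℝ) - 1)⁻¹ * SE) / n ≤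
      (TV + 1 / 2 * ((l : ℝ) - 1)⁻¹ * TE) / l + Y * (n - m) / n := by
  have hn0 : (0 : ℝ) < n := by exact_mod_cast hn
  have hnl' : (n : ℝ) ≤ l := by exact_mod_cast hnl
  have hl0 : (0 : ℝ) < l := hn0.trans_le hnl'
  have hvert : l * ((n - m) * C + SV) ≤ n * TV + (n ^ 2 - m * l) * Y := by
    nlinarith [mul_le_mul_of_nonneg_left hSV (by linarith : (0 : ℝ) ≤ l),
      mul_le_mul_of_nonneg_left hS (by linarith : (0 : ℝ) ≤ l - n)]
  have hedge := mul_edge_cost_le hn hnl hY hSE hSETE hSEY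
  rw [div_add_div _ _ hl0.ne' hn0.ne', div_le_div_iff₀ hn0 (by positivity)]
  nlinarith

section Cost

variable {X Y : Type*} [PseudoMetricSpace X] [PseudoMetricSpace Y] {m n : ℕ}

noncomputable def gospa2Cost (y₀ : Y) (p C₂ : ℝ) (hmn : m ≤ n) (v : Fin m → X)
    (e : Fin m → Fin m → Y) (w : Fin n → X) (f : Fin n → Fin n → Y) (π : Equiv.Perm (Fin n)) :
    ℝ :=
  ((n : ℝ) - m) * C₂ ^ p + ∑ i : Fin m, dist (v i) (w (π (Fin.castLE hmn i))) ^ p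
    + 1 / 2 * ((n : ℝ) - 1)⁻¹ *
      ∑ i : Fin n, ∑ i' : Fin n, dist (fillEdges y₀ e i i') (f (π i) (π i')) ^ p

variable {y₀ : Y} {p C₂ : ℝ} {v : Fin m → X} {e : Fin m → Fin m → Y} {w : Fin n → X}
  {f : Fin n → Fin n → Y}

theorem dGOSPA2_eq_inf' (hmn : m ≤ n) : dGOSPA2 y₀ p C₂ hmn v e w f = ((n : ℝ) ^ (1 / p))⁻¹ *
    univ.inf' univ_nonempty fun π => gospa2Cost y₀ p C₂ hmn v e w f π ^ (1 / p) := by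
  unfold dGOSPA2 gospa2Cost fillEdges
  congr! 8 with π i - i' -
  split_ifs <;> rfl

theorem gospa2Cost_nonneg (hmn : m ≤ n) (hC₂ : 0 ≤ C₂ ^ p) (π : Equiv.Perm (Fin n)) :
    0 ≤ gospa2Cost y₀ p C₂ hmn v e w f π := by
  rcases n.eq_zero_or_pos with rfl | hn
  · obtain rfl := Nat.le_zero.mp hmn
    simp [gospa2Cost]
  have : (1 : ℝ) ≤ n := by exact_mod_cast hn
  have : (m : ℝ) ≤ n := by exact_mod_cast hmn
  have : 0 ≤ ((n : ℝ) - 1)⁻¹ := inv_nonneg.mpr (by linarith)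
  have : 0 ≤ (n : ℝ) - m := by linarith
  unfold gospa2Cost
  positivity

theorem dGOSPA2_le_of_perm (hmn : m ≤ n) (π : Equiv.Perm (Fin n))
    (hπ : 0 ≤ gospa2Cost y₀ p C₂ hmn v e w f π) :
    dGOSPA2 y₀ p C₂ hmn v e w f ≤ (gospa2Cost y₀ p C₂ hmn v e w f π / n) ^ (1 / p) := by
  rw [dGOSPA2_eq_inf', Real.div_rpow hπ (Nat.cast_nonneg n), div_eq_inv_mul (_ ^ _)]
  exact mul_le_mul_of_nonneg_left
    (inf'_le (fun π => gospa2Cost y₀ p C₂ hmn v e w f π ^ (1 / p)) (mem_univ π))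
    (inv_nonneg.mpr (Real.rpow_nonneg (Nat.cast_nonneg n) _))

theorem exists_perm_dGOSPA2_eq (hmn : m ≤ n) (hC₂ : 0 ≤ C₂ ^ p) :
    ∃ π, dGOSPA2 y₀ p C₂ hmn v e w f = (gospa2Cost y₀ p C₂ hmn v e w f π / n) ^ (1 / p) := by
  obtain ⟨π, -, hπ⟩ := exists_mem_eq_inf' (univ_nonempty (α := Equiv.Perm (Fin n)))
    fun π => gospa2Cost y₀ p C₂ hmn v e w f π ^ (1 / p)
  refine ⟨π, ?_⟩
  rw [dGOSPA2_eq_inf', hπ, Real.div_rpow (gospa2Cost_nonneg hmn hC₂ π) (Nat.cast_nonneg n),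
    inv_mul_eq_div]

theorem gospa2Cost_refl {l : ℕ} {v : Fin l → X} {e : Fin l → Fin l → Y} {w : Fin l → X}
    {f : Fin l → Fin l → Y} (π : Equiv.Perm (Fin l)) :
    gospa2Cost y₀ p C₂ le_rfl v e w f π = ∑ j, dist (v j) (w (π j)) ^ p
      + 1 / 2 * ((l : ℝ) - 1)⁻¹ * ∑ j, ∑ j', dist (e j j') (f (π j) (π j')) ^ p := by
  simp [gospa2Cost]

end Cost

theorem gospa2Cost_comp {X X' Y : Type*} [PseudoMetricSpace X] [PseudoMetricSpace X']
    [PseudoMetricSpace Y] {ι : X → X'} (hι : ∀ x x', dist (ι x) (ι x') = dist x x') {y₀ : Y}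
    {p C₂ : ℝ} {m n : ℕ} (hmn : m ≤ n) (v : Fin m → X) (e : Fin m → Fin m → Y) (w : Fin n → X)
    (f : Fin n → Fin n → Y) (π : Equiv.Perm (Fin n)) :
    gospa2Cost y₀ p C₂ hmn (ι ∘ v) e (ι ∘ w) f π = gospa2Cost y₀ p C₂ hmn v e w f π := by
  simp only [gospa2Cost, Function.comp_apply, hι]

theorem gospa2Cost_div_le_of_isLift {X Y : Type*} [PseudoMetricSpace X] [PseudoMetricSpace Y]
    {y₀ : Y} {p C₂ CX CY : ℝ} {m n l : ℕ} (hmn : m ≤ n) {hnl : n ≤ l} (hn : 1 ≤ n)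
    {π' : Equiv.Perm (Fin l)} {π : Equiv.Perm (Fin n)} {σ : Fin n → Fin l}
    (hσ : IsLift m hnl π' π σ) (hp : 0 < p)
    (htri : ∀ y₁ y₂ : Y, dist y₁ y₂ ^ p ≤ dist y₁ y₀ ^ p + dist y₀ y₂ ^ p)
    {e : Fin m → Fin m → Y} {f : Fin n → Fin n → Y} (he : IsGraph y₀ e) (hf : IsGraph y₀ f)
    (hdY : ∀ y y' : Y, dist y y' ≤ CY) (hCY : 0 ≤ CY ^ p)
    {a : Fin m → X} {b : Fin n → X} (hdX : ∀ i j, dist (a i) (b j) ≤ CX)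
    (hC₂ : CX ^ p + CY ^ p ≤ C₂ ^ p) {xstar xstar' : X}
    (hxstar : ∀ j, dist (b j) xstar ^ p = C₂ ^ p - CY ^ p)
    (hxstar' : ∀ i, dist (a i) xstar' ^ p = C₂ ^ p) (hstars : dist xstar xstar' ^ p = C₂ ^ p) :
    gospa2Cost y₀ p C₂ hmn a e b f π / n ≤
      gospa2Cost y₀ p C₂ le_rfl (fillVertices xstar a) (fillEdges y₀ e)
        (fillVertices xstar' b) (fillEdges y₀ f) π' / l + CY ^ p * (n - m) / n := by
  have hclose : ∀ i j, dist (a i) (b j) ^ p ≤ C₂ ^ p - CY ^ p := fun i j => by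
    linarith [Real.rpow_le_rpow dist_nonneg (hdX i j) hp.le]
  have hK : ∀ j, dist xstar (b j) ^ p = C₂ ^ p - CY ^ p := fun j => by rw [dist_comm, hxstar]
  have hC : ∀ k : Fin l, dist (fillVertices xstar a k) xstar' ^ p = C₂ ^ p := fun k => by
    rcases fillVertices_mem xstar a k with h | ⟨i, h⟩
    · rw [h, hstars]
    · rw [← h, hxstar']
  rw [gospa2Cost, gospa2Cost_refl]
  exact normalized_cost_le hnl hn hCY (sum_dist_rpow_add_le_sum_dist_fillVertices hmn hσ hclose hK)
    ((sum_le_card_nsmul _ _ _ fun i _ => dist_fillVertices_rpow_le hclose hK _ _).trans_eq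
      (by simp))
    (sum_dist_fillVertices_eq hσ hC) (by positivity) (sum_sum_dist_fillEdges_le hσ htri)
    (sum_sum_dist_fillEdges_le_mul he hf hp hdY π)

/-- Lemma: extending both graphs with different auxiliary vertices does
not decrease the GOSPA2 distance by more than `C_Y^p·(n−m)/n`. Adjoin `x⋆, x⋆'` to `X`
(in an extension `X'`) with `d(x,x⋆)^p = C₂^p − C_Y^p` and `d(x,x⋆')^p = d(x⋆,x⋆')^p = C₂^p`;
fill up `([m],v,e)` to size `l` with isolated vertices at `x⋆` and `([n],w,f)` to size `l`
with isolated vertices at `x⋆'`. Then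
`d_{G,R₂}(([m],v,e),([n],w,f)) ≤ (d_{G,R₂}(([l],v',e'),([l],w',f'))^p + C_Y^p·(n−m)/n)^{1/p}`. -/
theorem dGOSPA2_fillup_both_bound
    {X X' Y : Type*} [PseudoMetricSpace X] [PseudoMetricSpace X'] [PseudoMetricSpace Y]
    (y₀ : Y) (p C₂ CX CY : ℝ) (hp : 1 ≤ p)
    (hpY : p = 1 ∨ (1 < p ∧ ∀ y₁ y₂ : Y, dist y₁ y₂ ≤ max (dist y₁ y₀) (dist y₀ y₂)))
    (hCX0 : 0 ≤ CX) (hCY0 : 0 ≤ CY)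
    (hdX : ∀ x x' : X, dist x x' ≤ CX) (hdY : ∀ y y' : Y, dist y y' ≤ CY)
    (hC₂ : CX ^ p + CY ^ p ≤ C₂ ^ p)
    {m n l : ℕ} (hmn : m ≤ n) (hnl : n ≤ l) (hn : 1 ≤ n)
    (v : Fin m → X) (e : Fin m → Fin m → Y)
    (w : Fin n → X) (f : Fin n → Fin n → Y)
    (he : IsGraph y₀ e) (hf : IsGraph y₀ f)
    (ιX : X → X') (hιX : ∀ x x', dist (ιX x) (ιX x') = dist x x')
    (xstar xstar' : X')
    (hxstar : ∀ x, dist (ιX x) xstar ^ p = C₂ ^ p - CY ^ p)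
    (hxstar' : ∀ x, dist (ιX x) xstar' ^ p = C₂ ^ p)
    (hstars : dist xstar xstar' ^ p = C₂ ^ p)
    (v' : Fin l → X')
    (hv' : ∀ i : Fin l, v' i = if h : (i : ℕ) < m then ιX (v ⟨i.1, h⟩) else xstar)
    (e' : Fin l → Fin l → Y)
    (he' : ∀ i i' : Fin l, e' i i' =
      if h : (i : ℕ) < m ∧ (i' : ℕ) < m then e ⟨i.1, h.1⟩ ⟨i'.1, h.2⟩ else y₀)
    (w' : Fin l → X')
    (hw' : ∀ j : Fin l, w' j = if h : (j : ℕ) < n then ιX (w ⟨j.1, h⟩) else xstar')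
    (f' : Fin l → Fin l → Y)
    (hf' : ∀ j j' : Fin l, f' j j' =
      if h : (j : ℕ) < n ∧ (j' : ℕ) < n then f ⟨j.1, h.1⟩ ⟨j'.1, h.2⟩ else y₀) :
    dGOSPA2 y₀ p C₂ hmn v e w f ≤
      (dGOSPA2 y₀ p C₂ (le_refl l) v' e' w' f' ^ p
        + CY ^ p * ((n : ℝ) - (m : ℝ)) / (n : ℝ)) ^ (1/p) := by
  have hp0 : 0 < p := one_pos.trans_le hp
  have hC₂p : 0 ≤ C₂ ^ p :=
    (add_nonneg (Real.rpow_nonneg hCX0 p) (Real.rpow_nonneg hCY0 p)).trans hC₂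
  obtain rfl : v' = fillVertices xstar (ιX ∘ v) := funext hv'
  obtain rfl : w' = fillVertices xstar' (ιX ∘ w) := funext hw'
  obtain rfl : e' = fillEdges y₀ e := funext₂ he'
  obtain rfl : f' = fillEdges y₀ f := funext₂ hf'
  obtain ⟨π', hπ'⟩ := exists_perm_dGOSPA2_eq (y₀ := y₀) (v := fillVertices xstar (ιX ∘ v))
    (e := fillEdges y₀ e) (w := fillVertices xstar' (ιX ∘ w)) (f := fillEdges y₀ f) le_rfl hC₂p
  obtain ⟨π, σ, hσ⟩ := exists_isLift hmn hnl π'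
  have hcost := gospa2Cost_div_le_of_isLift (a := ιX ∘ v) (b := ιX ∘ w) hmn hn hσ hp0
    (dist_rpow_triangle hp0.le (hpY.imp_right And.right)) he hf hdY
    (Real.rpow_nonneg hCY0 p) (fun i j => (hιX _ _).trans_le (hdX (v i) (w j))) hC₂
    (fun j => hxstar (w j)) (fun i => hxstar' (v i)) hstars
  rw [gospa2Cost_comp hιX] at hcost
  have hcost0 : 0 ≤ gospa2Cost y₀ p C₂ hmn v e w f π := gospa2Cost_nonneg hmn hC₂p π
  calc dGOSPA2 y₀ p C₂ hmn v e w f ≤ (gospa2Cost y₀ p C₂ hmn v e w f π / n) ^ (1 / p) :=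
        dGOSPA2_le_of_perm hmn π hcost0
    _ ≤ _ := Real.rpow_le_rpow (div_nonneg hcost0 n.cast_nonneg) hcost (by positivity)
    _ = _ := by
        rw [hπ', ← Real.rpow_mul (div_nonneg (gospa2Cost_nonneg le_rfl hC₂p π') l.cast_nonneg),
          one_div_mul_cancel hp0.ne', Real.rpow_one]
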